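/- Let G be a non-bipartite graph and r a non-negative integer. Then (G^{−1/(2r+1)})^{2r+1} and G are homomorphically equivalent. -/

import Mathlib

structure UGraph where
  V : Type
  Adj : V → V → Prop
  symm : ∀ u v, Adj u v → Adj v u

namespace UGraph

/-- There is a walk of length exactly `n` from `u` to `v`. -/
def walkLen (G : UGraph) : ℕ → G.V → G.V → Prop
  | 0, u, v => u = v
  | n+1, u, v => ∃ w, G.Adj u w ∧ G.walkLen n w v

theorem walkLen_concat (G : UGraph) : ∀ (n : ℕ) (u v w : G.V),
    G.walkLen n u v → G.Adj v w → G.walkLen (n+1) u w := by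
  intro n
  induction n with
  | zero =>
      intro u v w h hadj
      cases h
      exact ⟨w, hadj, rfl⟩
  | succ n ih =>
      rintro u v w ⟨x, hux, hxv⟩ hadj
      exact ⟨x, hux, ih x v w hxv hadj⟩

theorem walkLen_symm (G : UGraph) : ∀ (n : ℕ) (u v : G.V),
    G.walkLen n u v → G.walkLen n v u := by
  intro n
  induction n with
  | zero => intro u v h; exact h.symm
  | succ n ih =>
      rintro u v ⟨w, huw, hwv⟩
      exact G.walkLen_concat n v w u (ih w v hwv) (G.symm u w huw)

/-- The `k`-th power of a graph: same vertices, adjacency = existence of a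
walk of length exactly `k` (loops allowed). -/
def pow (G : UGraph) (k : ℕ) : UGraph where
  V := G.V
  Adj u v := G.walkLen k u v
  symm := G.walkLen_symm k

/-- Existence of a graph homomorphism. -/
def homTo (G H : UGraph) : Prop :=
  ∃ f : G.V → H.V, ∀ u v, G.Adj u v → H.Adj (f u) (f v)

/-- The `(2s+1)`-subdivision `S_{2s+1}(G)`: every edge is replaced by a path
of length `2s+1`.  Following the paper's notation, the ordered pair `(u,v)`
(with `u ~ v`) carries the `s` inner vertices `(uv)_1, …, (uv)_s`. -/
def subdiv (G : UGraph) (s : ℕ) : UGraph where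
  V := G.V ⊕ ({p : G.V × G.V // G.Adj p.1 p.2} × Fin s)
  Adj x y :=
    match x, y with
    | Sum.inl u, Sum.inl v => s = 0 ∧ G.Adj u v
    | Sum.inl u, Sum.inr (e, k) => u = e.1.2 ∧ (k : ℕ) = s - 1
    | Sum.inr (e, k), Sum.inl u => u = e.1.2 ∧ (k : ℕ) = s - 1
    | Sum.inr (e, k), Sum.inr (e', l) =>
        e'.1.1 = e.1.2 ∧ e'.1.2 = e.1.1 ∧
        ((k : ℕ) + (l : ℕ) + 2 = s ∨ (k : ℕ) + (l : ℕ) + 2 = s + 1)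
  symm := by
    rintro (u | ⟨e, k⟩) (v | ⟨e', l⟩) h
    · exact ⟨h.1, G.symm _ _ h.2⟩
    · exact h
    · exact h
    · obtain ⟨h1, h2, h3⟩ := h
      exact ⟨h2.symm, h1.symm, by omega⟩

/-- `q < og(G)`: the rational `q` is smaller than the odd girth of `G`
(the length of a shortest odd closed walk; vacuously true if `G` is bipartite). -/
def ltOddGirth (G : UGraph) (q : ℚ) : Prop :=
  ∀ n : ℕ, Odd n → (∃ v, G.walkLen n v v) → q < (n : ℚ)

/-- A graph is non-bipartite iff it contains an odd closed walk. -/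
def Nonbipartite (G : UGraph) : Prop :=
  ∃ (n : ℕ) (v : G.V), Odd n ∧ G.walkLen n v v

/-- The odd girth, as an extended natural number (`⊤` for bipartite graphs). -/
noncomputable def oddGirth (G : UGraph) : ℕ∞ :=
  sInf {N : ℕ∞ | ∃ n : ℕ, N = (n : ℕ∞) ∧ Odd n ∧ ∃ v, G.walkLen n v v}

/-- The complete graph on `m` vertices. -/
def completeGraph (m : ℕ) : UGraph :=
  ⟨Fin m, fun u v => u ≠ v, fun _ _ h => h.symm⟩

/-- The chromatic number: least `m` such that `G` maps homomorphically to `K_m`. -/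
noncomputable def chromatic (G : UGraph) : ℕ :=
  sInf {m : ℕ | G.homTo (completeGraph m)}

/-- The `i`-th power thickness
`θ_i(G) = sup { (2r+1)/(2s+1) | χ(G^{(2r+1)/(2s+1)}) ≤ χ(G)+i, (2r+1)/(2s+1) < og(G) }`. -/
noncomputable def powerThickness (G : UGraph) (i : ℤ) : ℝ :=
  sSup {x : ℝ | ∃ r s : ℕ, x = (2*(r:ℝ)+1)/(2*(s:ℝ)+1) ∧
    ((((G.subdiv s).pow (2*r+1)).chromatic : ℤ) ≤ (G.chromatic : ℤ) + i) ∧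
    G.ltOddGirth ((2*(r:ℚ)+1)/(2*(s:ℚ)+1))}

/-- The graph `H^{-1/(2r+1)}`. -/
def negPow (H : UGraph) (r : ℕ) : UGraph where
  V := {A : Fin (r+1) → Set H.V //
        (∃ v, A 0 = {v}) ∧
        ∀ i : Fin (r+1), (A i).Nonempty ∧ A i ⊆ {u | ∃ v ∈ A 0, H.walkLen i v u}}
  Adj A B :=
    (∀ i j : Fin (r+1), (j : ℕ) = (i : ℕ) + 1 → A.1 i ⊆ B.1 j ∧ B.1 i ⊆ A.1 j) ∧
    ∀ j : Fin (r+1), ∀ a ∈ A.1 j, ∀ b ∈ B.1 j, H.Adj a b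
  symm := by
    rintro A B ⟨h1, h2⟩
    exact ⟨fun i j hij => ⟨(h1 i j hij).2, (h1 i j hij).1⟩,
           fun j b hb a ha => H.symm _ _ (h2 j a ha b hb)⟩

/-- The circular complete graph `K_{n/d}`. -/
def circGraph (n d : ℕ) : UGraph where
  V := Fin n
  Adj u v := (d : ℤ) ≤ |(u : ℤ) - (v : ℤ)| ∧ |(u : ℤ) - (v : ℤ)| ≤ (n : ℤ) - d
  symm := by
    intro u v h
    rwa [abs_sub_comm]

/-- The circular chromatic number, as a real number. -/
noncomputable def circChrom (G : UGraph) : ℝ :=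
  sInf {x : ℝ | ∃ n d : ℕ, 0 < d ∧ 2 * d ≤ n ∧ Nat.gcd n d = 1 ∧
    x = (n : ℝ) / (d : ℝ) ∧ G.homTo (circGraph n d)}

/-- The cycle on `m` vertices. -/
def cycleGraph (m : ℕ) : UGraph :=
  ⟨ZMod m, fun i j => i = j + 1 ∨ j = i + 1, fun _ _ h => h.symm⟩

/-- Graph isomorphism. -/
def Isom (G H : UGraph) : Prop :=
  ∃ f : G.V ≃ H.V, ∀ u v, G.Adj u v ↔ H.Adj (f u) (f v)

/-- The helical graph `H(m,n,k)`. -/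
def helical (m n k : ℕ) : UGraph where
  V := {A : Fin k → Set (Fin m) //
        (∀ h : 0 < k, (A ⟨0, h⟩).ncard = n) ∧
        (∀ i, n ≤ (A i).ncard) ∧
        (∀ i : Fin k, ∀ h : (i : ℕ) + 1 < k, A i ∩ A ⟨(i : ℕ) + 1, h⟩ = ∅) ∧
        (∀ i : Fin k, ∀ h : (i : ℕ) + 2 < k, A i ⊆ A ⟨(i : ℕ) + 2, h⟩)}
  Adj A B :=
    (∀ i, A.1 i ∩ B.1 i = ∅) ∧
    (∀ i : Fin k, ∀ h : (i : ℕ) + 1 < k,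
      A.1 i ⊆ B.1 ⟨(i : ℕ) + 1, h⟩ ∧ B.1 i ⊆ A.1 ⟨(i : ℕ) + 1, h⟩)
  symm := by
    rintro A B ⟨h1, h2⟩
    refine ⟨fun i => ?_, fun i h => ⟨(h2 i h).2, (h2 i h).1⟩⟩
    rw [Set.inter_comm]
    exact h1 i

/-- A graph with chromatic number `k` is colorful if every proper `k`-coloring
admits a (nonempty) induced subgraph all of whose vertices see all `k` colors in
their closed neighborhood. -/
def Colorful (G : UGraph) : Prop :=
  ∀ c : G.V → Fin G.chromatic, (∀ u v, G.Adj u v → c u ≠ c v) →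
    ∃ S : Set G.V, S.Nonempty ∧
      ∀ v ∈ S, ∀ col : Fin G.chromatic,
        ∃ u ∈ S, (u = v ∨ G.Adj v u) ∧ c u = col

end UGraph

/-!
Along an edge `M ~ M'` of `G^{-1/(2r+1)}` each set `M_i` lies in `M'_{i+1}` (sets indexed
from `0`). Hence along a walk `A = X₀, …, X_{2r+1} = B` the centre of `A` lies in the last set
of `X_r` and the centre of `B` in the last set of `X_{r+1}`; these two sets are completely
joined, so the centres of adjacent vertices of the power are adjacent in `G`.

Conversely, send `u` to `(u, N(u), u, N(u), …)`. For an edge `uv` put `x = u, v, u, v, …` and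
let `X_k` have `i`-th set `{x_{k+i}}` for `i ≤ k` and the `(k+i)`-th term of
`(u, N(u), u, …)` for `i > k`. Then `X₀, …, X_{r+1}` is a walk starting at the image of `u`,
and its end `(x_{r+1}, …, x_{2r+1})` is the `r`-th vertex of the same walk built for `vu`;
going back along that walk gives a walk of length `2r+1` from the image of `u` to that of `v`.
-/

namespace UGraph

def alternating {α : Type*} (u v : α) (m : ℕ) : α := if Even m then u else v

section Alternating

variable {α : Type*} (u v : α) (m : ℕ)

theorem alternating_add_two : alternating u v (m + 2) = alternating u v m := by
  simp [alternating, parity_simps]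

theorem alternating_succ : alternating u v (m + 1) = alternating v u m := by
  by_cases hm : Even m <;> simp [alternating, hm, parity_simps]

end Alternating

section Walks

variable (G : UGraph)

theorem walkLen_add {m n : ℕ} {u w : G.V} :
    G.walkLen (m + n) u w ↔ ∃ v, G.walkLen m u v ∧ G.walkLen n v w := by
  induction m generalizing u with
  | zero => simp [walkLen]
  | succ m ih =>
    rw [Nat.succ_add]
    simp only [walkLen, ih]
    exact ⟨fun ⟨x, hux, v, hxv, hvw⟩ => ⟨v, ⟨x, hux, hxv⟩, hvw⟩,
      fun ⟨v, ⟨x, hux, hxv⟩, hvw⟩ => ⟨x, hux, v, hxv, hvw⟩⟩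

theorem walkLen_of_chain (f : ℕ → G.V) (n : ℕ) (hf : ∀ k < n, G.Adj (f k) (f (k + 1))) :
    G.walkLen n (f 0) (f n) := by
  induction n with
  | zero => rfl
  | succ n ih =>
    exact G.walkLen_concat n _ _ _ (ih fun k hk => hf k (by omega)) (hf n (by omega))

variable {G}

theorem Nonbipartite.exists_adj (hG : G.Nonbipartite) : ∃ u v, G.Adj u v := by
  obtain ⟨n, u, hn, hwalk⟩ := hG
  obtain ⟨m, rfl⟩ : ∃ m, n = m + 1 := ⟨n - 1, by have := hn.pos; omega⟩
  obtain ⟨v, huv, -⟩ := hwalk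
  exact ⟨u, v, huv⟩

theorem adj_alternating {u v : G.V} (huv : G.Adj u v) (m : ℕ) :
    G.Adj (alternating u v m) (alternating u v (m + 1)) := by
  by_cases hm : Even m
  · simpa [alternating, hm, parity_simps] using huv
  · simpa [alternating, hm, parity_simps] using G.symm _ _ huv

theorem walkLen_alternating {u v : G.V} (huv : G.Adj u v) (m n : ℕ) :
    G.walkLen n (alternating u v m) (alternating u v (m + n)) :=
  G.walkLen_of_chain (fun j => alternating u v (m + j)) n fun j _ => adj_alternating huv (m + j)

end Walks

section Center

variable {G : UGraph} {r : ℕ}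

noncomputable def negPowCenter (A : (G.negPow r).V) : G.V := A.2.1.choose

theorem negPowCenter_mem (A : (G.negPow r).V) : negPowCenter A ∈ A.1 0 := by
  rw [A.2.1.choose_spec]
  rfl

theorem negPow_subset_of_walkLen {A B : (G.negPow r).V} (k : Fin (r + 1))
    (h : (G.negPow r).walkLen k A B) : A.1 0 ⊆ B.1 k := by
  induction k using Fin.induction generalizing B with
  | zero => cases h; rfl
  | succ k ih =>
    obtain ⟨M, hAM, B', hMB, rfl⟩ := ((G.negPow r).walkLen_add (n := 1)).1 h
    exact (ih hAM).trans (hMB.1 k.castSucc k.succ rfl).1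

end Center

theorem negPow_pow_homTo (G : UGraph) (r : ℕ) : ((G.negPow r).pow (2 * r + 1)).homTo G := by
  refine ⟨negPowCenter, fun A B hAB => ?_⟩
  have hAB : (G.negPow r).walkLen (r + (r + 1)) A B := by rwa [← add_assoc, ← two_mul]
  obtain ⟨M, hAM, M', hMM', hM'B⟩ := (G.negPow r).walkLen_add.1 hAB
  exact hMM'.2 (Fin.last r) _ (negPow_subset_of_walkLen _ hAM (negPowCenter_mem A)) _
    (negPow_subset_of_walkLen _ ((G.negPow r).walkLen_symm r _ _ hM'B) (negPowCenter_mem B))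

def parityNbhd (G : UGraph) (u : G.V) (m : ℕ) : Set G.V :=
  if Even m then {u} else {x | G.Adj u x}

section ParityNbhd

variable {G : UGraph} {u v : G.V}

theorem parityNbhd_congr (u : G.V) {m n : ℕ} (h : Even m ↔ Even n) :
    G.parityNbhd u m = G.parityNbhd u n := by
  simp [parityNbhd, h]

theorem parityNbhd_add_two (u : G.V) (m : ℕ) : G.parityNbhd u (m + 2) = G.parityNbhd u m :=
  parityNbhd_congr u (by simp [parity_simps])

theorem alternating_mem_parityNbhd (huv : G.Adj u v) (m : ℕ) :
    alternating u v m ∈ G.parityNbhd u m := by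
  by_cases hm : Even m <;> simp [alternating, parityNbhd, hm, huv]

theorem adj_of_mem_parityNbhd {a b : G.V} {m : ℕ} (ha : a ∈ G.parityNbhd u m)
    (hb : b ∈ G.parityNbhd u (m + 1)) : G.Adj a b := by
  by_cases hm : Even m <;> simp_all [parityNbhd, parity_simps]
  exact G.symm _ _ ha

theorem walkLen_of_mem_parityNbhd (huv : G.Adj u v) {m : ℕ} {x : G.V}
    (hx : x ∈ G.parityNbhd u m) : G.walkLen m u x := by
  by_cases hm : Even m
  · simp only [parityNbhd, hm, if_true, Set.mem_singleton_iff] at hx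
    simpa [alternating, hm, hx] using walkLen_alternating huv 0 m
  · simp only [parityNbhd, hm, if_false, Set.mem_ofPred_eq] at hx
    simpa [alternating, hm] using walkLen_alternating hx 0 m

end ParityNbhd

def halfWalkSet {G : UGraph} (u v : G.V) (k i : ℕ) : Set G.V :=
  if i ≤ k then {alternating u v (k + i)} else G.parityNbhd u (k + i)

section HalfWalk

variable {G : UGraph} {u v : G.V}

theorem alternating_mem_halfWalkSet (huv : G.Adj u v) (k i : ℕ) :
    alternating u v (k + i) ∈ halfWalkSet u v k i := by
  unfold halfWalkSet
  split_ifs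
  · rfl
  · exact alternating_mem_parityNbhd huv _

theorem halfWalkSet_subset_parityNbhd (huv : G.Adj u v) (k i : ℕ) :
    halfWalkSet u v k i ⊆ G.parityNbhd u (k + i) := by
  unfold halfWalkSet
  split_ifs
  · exact Set.singleton_subset_iff.2 (alternating_mem_parityNbhd huv _)
  · rfl

theorem halfWalkSet_subset_succ_succ (k i : ℕ) :
    halfWalkSet u v k i ⊆ halfWalkSet u v (k + 1) (i + 1) := by
  have e : k + 1 + (i + 1) = k + i + 2 := by omega
  by_cases hi : i ≤ k
  · simp [halfWalkSet, hi, e, alternating_add_two]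
  · simp [halfWalkSet, hi, e, parityNbhd_add_two]

theorem halfWalkSet_succ_subset (huv : G.Adj u v) (k i : ℕ) :
    halfWalkSet u v (k + 1) i ⊆ halfWalkSet u v k (i + 1) := by
  have e : k + 1 + i = k + (i + 1) := by omega
  by_cases hi : i + 1 ≤ k
  · simp [halfWalkSet, hi, (by omega : i ≤ k + 1), e]
  · rw [show halfWalkSet u v k (i + 1) = G.parityNbhd u (k + (i + 1)) from if_neg hi, ← e]
    exact halfWalkSet_subset_parityNbhd huv _ _

theorem walkLen_of_mem_halfWalkSet (huv : G.Adj u v) {k i : ℕ} {x : G.V}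
    (hx : x ∈ halfWalkSet u v k i) : G.walkLen i (alternating u v k) x := by
  unfold halfWalkSet at hx
  split_ifs at hx with hi
  · rw [Set.mem_singleton_iff.1 hx]
    exact walkLen_alternating huv k i
  · obtain ⟨j, rfl⟩ : ∃ j, i = j + 1 := ⟨i - 1, by omega⟩
    by_cases hk : Even k
    · rw [alternating, if_pos hk]
      rw [parityNbhd_congr u (n := j + 1) (by simp [Nat.even_add, hk])] at hx
      exact walkLen_of_mem_parityNbhd huv hx
    · rw [alternating, if_neg hk]
      rw [parityNbhd_congr u (n := j) (by simp [Nat.even_add, Nat.even_add_one, hk])] at hx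
      exact ⟨u, G.symm _ _ huv, walkLen_of_mem_parityNbhd huv hx⟩

variable (r : ℕ)

def halfWalk (huv : G.Adj u v) (k : ℕ) : (G.negPow r).V :=
  ⟨fun i => halfWalkSet u v k i, ⟨alternating u v k, by simp [halfWalkSet]⟩, fun i =>
    ⟨⟨_, alternating_mem_halfWalkSet huv k i⟩,
      fun _ hx => ⟨_, by simp [halfWalkSet], walkLen_of_mem_halfWalkSet huv hx⟩⟩⟩

theorem halfWalk_adj_succ (huv : G.Adj u v) (k : ℕ) :
    (G.negPow r).Adj (halfWalk r huv k) (halfWalk r huv (k + 1)) := by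
  refine ⟨fun i j hij => ?_, fun j a ha b hb => ?_⟩
  · simp only [halfWalk, hij]
    exact ⟨halfWalkSet_subset_succ_succ k i, halfWalkSet_succ_subset huv k i⟩
  · have hb' := halfWalkSet_subset_parityNbhd huv (k + 1) j hb
    rw [Nat.add_right_comm] at hb'
    exact adj_of_mem_parityNbhd (halfWalkSet_subset_parityNbhd huv k j ha) hb'

theorem walkLen_halfWalk (huv : G.Adj u v) (k : ℕ) :
    (G.negPow r).walkLen k (halfWalk r huv 0) (halfWalk r huv k) :=
  walkLen_of_chain _ (halfWalk r huv) k fun j _ => halfWalk_adj_succ r huv j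

theorem halfWalk_succ_eq (huv : G.Adj u v) :
    halfWalk r huv (r + 1) = halfWalk r (G.symm _ _ huv) r :=
  Subtype.ext <| funext fun i => by
    have hi : (i : ℕ) ≤ r := i.is_le
    simp only [halfWalk, halfWalkSet, if_pos hi, if_pos (hi.trans r.le_succ),
      Nat.add_right_comm r 1, alternating_succ]

theorem halfWalk_zero_congr {v' : G.V} (huv : G.Adj u v) (huv' : G.Adj u v') :
    halfWalk r huv 0 = halfWalk r huv' 0 :=
  Subtype.ext <| funext fun i => by
    by_cases hi : i = 0 <;> simp [halfWalk, halfWalkSet, hi, alternating]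

end HalfWalk

/-- The vertex `(u, N(u), u, N(u), …)`. -/
noncomputable def star {G : UGraph} (r : ℕ) {u : G.V} (hu : ∃ v, G.Adj u v) :
    (G.negPow r).V :=
  halfWalk r hu.choose_spec 0

theorem walkLen_star {G : UGraph} (r : ℕ) {u v : G.V} (huv : G.Adj u v) :
    (G.negPow r).walkLen (2 * r + 1) (star r ⟨v, huv⟩) (star r ⟨u, G.symm _ _ huv⟩) := by
  have huv' := G.symm _ _ huv
  have hfirst := walkLen_halfWalk r huv (r + 1)
  rw [halfWalk_succ_eq] at hfirst
  have hsecond := (G.negPow r).walkLen_symm _ _ _ (walkLen_halfWalk r huv' r)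
  rw [star, star, halfWalk_zero_congr r _ huv, halfWalk_zero_congr r _ huv', two_mul,
    add_right_comm]
  exact (G.negPow r).walkLen_add.2 ⟨_, hfirst, hsecond⟩

theorem homTo_pow_negPow (G : UGraph) (hG : ∃ u v, G.Adj u v) (r : ℕ) :
    G.homTo ((G.negPow r).pow (2 * r + 1)) := by
  classical
  obtain ⟨u₀, v₀, h₀⟩ := hG
  let f (w : G.V) : (G.negPow r).V :=
    if hw : ∃ x, G.Adj w x then star r hw else star r ⟨v₀, h₀⟩
  refine ⟨f, fun u v huv => ?_⟩
  show (G.negPow r).walkLen _ (f u) (f v)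
  rw [show f u = _ from dif_pos ⟨v, huv⟩, show f v = _ from dif_pos ⟨u, G.symm _ _ huv⟩]
  exact walkLen_star r huv

end UGraph

open UGraph

theorem negPow_pow_hom_equiv (G : UGraph) (hG : G.Nonbipartite) (r : ℕ) :
    ((G.negPow r).pow (2 * r + 1)).homTo G ∧ G.homTo ((G.negPow r).pow (2 * r + 1)) :=
  ⟨G.negPow_pow_homTo r, G.homTo_pow_negPow hG.exists_adj r⟩
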